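/- arXiv:1106.4606 — 2 statements merged into one kernel-verified Lean document; each statement's English description precedes it below -/
import Mathlib

section
/- Let σ be a relational first-order language and let A and B be σ-structures on the same universe U. Define the product structure A·B on U by interpreting each relation symbol R as the intersection R^A ∩ R^B. Then for every quantifier-free Horn formula φ(x̄) over σ and every tuple ā from U, if A ⊨ φ(ā) and B ⊨ φ(ā), then A·B ⊨ φ(ā). -/
/-! A negative literal true in either factor stays true in the product, whose relations are
smaller; a positive literal needs both factors. A clause could fail to transfer only if both
factors satisfy it through positive literals alone, and the Horn condition forces those to be
one and the same literal. -/

/-- A relational first-order signature: relation symbols with arities. -/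
structure RelSig where
  symb : Type
  ar : symb → ℕ

/-- An atomic formula over a variable type `ν`. -/
structure Atom (σ : RelSig) (ν : Type) where
  rel : σ.symb
  args : Fin (σ.ar rel) → ν

/-- An interpretation of the relation symbols of `σ` on a universe `U`. -/
def Interp (σ : RelSig) (U : Type) := ∀ r : σ.symb, (Fin (σ.ar r) → U) → Prop

/-- Satisfaction of an atom under a variable assignment. -/
def SatAtom {σ : RelSig} {U ν : Type} (I : Interp σ U) (a : ν → U)
    (A : Atom σ ν) : Prop :=
  I A.rel (fun i => a (A.args i))

/-- Satisfaction of a literal (atom together with a polarity). -/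
def SatLit {σ : RelSig} {U ν : Type} (I : Interp σ U) (a : ν → U)
    (l : Atom σ ν × Bool) : Prop :=
  if l.2 then SatAtom I a l.1 else ¬SatAtom I a l.1

/-- Satisfaction of a clause: some literal holds. -/
def SatFOClause {σ : RelSig} {U ν : Type} (I : Interp σ U) (a : ν → U)
    (C : List (Atom σ ν × Bool)) : Prop :=
  ∃ l ∈ C, SatLit I a l

/-- A first-order Horn clause: at most one positive atom. -/
def FOHornClause {σ : RelSig} {ν : Type} (C : List (Atom σ ν × Bool)) : Prop :=
  (C.filter (fun l => l.2)).length ≤ 1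

/-- The product structure: each relation interpreted as the intersection. -/
def ProdInterp {σ : RelSig} {U : Type} (IA IB : Interp σ U) : Interp σ U :=
  fun r t => IA r t ∧ IB r t

theorem List.eq_of_mem_of_length_le_one {α : Type*} {l : List α} (h : l.length ≤ 1) {x y : α}
    (hx : x ∈ l) (hy : y ∈ l) : x = y := by
  rcases l with _ | ⟨z, _ | _⟩ <;> simp_all

theorem FOHornClause.eq_of_pos {σ : RelSig} {ν : Type} {C : List (Atom σ ν × Bool)}
    (hC : FOHornClause C) {l l' : Atom σ ν × Bool} (hl : l ∈ C) (hl' : l' ∈ C)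
    (hpos : l.2) (hpos' : l'.2) : l = l' :=
  List.eq_of_mem_of_length_le_one hC (List.mem_filter.2 ⟨hl, hpos⟩)
    (List.mem_filter.2 ⟨hl', hpos'⟩)

section SatLit

variable {σ : RelSig} {U ν : Type} {IA IB : Interp σ U} {a : ν → U} {l : Atom σ ν × Bool}

theorem SatLit.prodInterp_of_neg_left (hneg : l.2 = false) (h : SatLit IA a l) :
    SatLit (ProdInterp IA IB) a l := by
  simp only [SatLit, hneg, Bool.false_eq_true, if_false] at h ⊢
  exact fun hAB => h hAB.1

theorem SatLit.prodInterp_of_neg_right (hneg : l.2 = false) (h : SatLit IB a l) :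
    SatLit (ProdInterp IA IB) a l := by
  simp only [SatLit, hneg, Bool.false_eq_true, if_false] at h ⊢
  exact fun hAB => h hAB.2

theorem SatLit.prodInterp_of_pos (hpos : l.2 = true) (hA : SatLit IA a l)
    (hB : SatLit IB a l) : SatLit (ProdInterp IA IB) a l := by
  simp only [SatLit, hpos, if_true] at hA hB ⊢
  exact ⟨hA, hB⟩

end SatLit

theorem SatFOClause.prodInterp {σ : RelSig} {U ν : Type} {IA IB : Interp σ U} {a : ν → U}
    {C : List (Atom σ ν × Bool)} (hC : FOHornClause C) (hA : SatFOClause IA a C)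
    (hB : SatFOClause IB a C) : SatFOClause (ProdInterp IA IB) a C := by
  obtain ⟨lA, hlA, sA⟩ := hA
  obtain ⟨lB, hlB, sB⟩ := hB
  cases hposA : lA.2
  · exact ⟨lA, hlA, sA.prodInterp_of_neg_left hposA⟩
  cases hposB : lB.2
  · exact ⟨lB, hlB, sB.prodInterp_of_neg_right hposB⟩
  obtain rfl := hC.eq_of_pos hlA hlB hposA hposB
  exact ⟨lA, hlA, sA.prodInterp_of_pos hposA sB⟩

/-- Quantifier-free Horn formulas (conjunctions `φ` of Horn clauses) are
preserved by the intersection product of two structures on a common universe. -/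
theorem qf_horn_preserved_under_product {σ : RelSig} {U ν : Type}
    (IA IB : Interp σ U) (φ : List (List (Atom σ ν × Bool)))
    (hφ : ∀ C ∈ φ, FOHornClause C) (a : ν → U)
    (hA : ∀ C ∈ φ, SatFOClause IA a C) (hB : ∀ C ∈ φ, SatFOClause IB a C) :
    ∀ C ∈ φ, SatFOClause (ProdInterp IA IB) a C :=
  fun C hC => (hA C hC).prodInterp (hφ C hC) (hB C hC)
end

section
/- There is no universal Horn sentence θ over the vocabulary {E, F} (two binary relation symbols) such that for all structures M on a common finite universe, M ⊨ θ characterizes 'F is a matching contained in E of size ≥ K' in a way preserved under intersection products; formally: if θ is any sentence preserved under intersection products of structures with common universe, then θ does not define the class of structures (V, E, F) where F is a matching of the graph (V,E) with |F| ≥ ⌊|V|/2⌋, for |V| ≥ 3 odd. -/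
/-- `F` is a matching contained in `E`: a symmetric irreflexive subrelation
of `E` in which every vertex has at most one partner. -/
def IsMatchingRel {V : Type*} (E F : V → V → Prop) : Prop :=
  (∀ x y, F x y → E x y) ∧ (∀ x y, F x y → F y x) ∧
  (∀ x, ¬F x x) ∧ (∀ x y z, F x y → F x z → y = z)

/-- The set of (undirected) edges of a binary relation. -/
def relEdges {V : Type*} (F : V → V → Prop) : Set (Sym2 V) :=
  {e | ∃ x y, e = s(x, y) ∧ F x y}

/-! On three vertices the edges `{0,1}` and `{1,2}` are each a matching of size `⌊3/2⌋ = 1`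
(inside the complete relation), but their intersection is the empty matching. -/

open Sym2

theorem relEdges_toRel {V : Type*} (s : Set (Sym2 V)) : relEdges (ToRel s) = s := by
  ext e
  induction e using Sym2.ind with
  | h x y => exact ⟨fun ⟨_, _, he, h⟩ => he ▸ h, fun h => ⟨x, y, rfl, h⟩⟩

theorem toRel_inter {V : Type*} (s t : Set (Sym2 V)) :
    ToRel (s ∩ t) = fun x y => ToRel s x y ∧ ToRel t x y :=
  rfl

theorem isMatchingRel_toRel_singleton {V : Type*} {E : V → V → Prop} {e : Sym2 V}
    (he : ¬e.IsDiag) (hE : ∀ x y, s(x, y) = e → E x y) : IsMatchingRel E (ToRel {e}) := by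
  simp only [IsMatchingRel, toRel_prop, Set.mem_singleton_iff]
  exact ⟨hE, fun _ _ h => eq_swap.trans h, fun _ h => he (h ▸ mk_isDiag_iff.2 rfl),
    fun _ _ _ hy hz => congr_right.1 (hy.trans hz.symm)⟩

/-- No property of {E,F}-structures preserved under intersection products can
define "F is a matching contained in E of size ≥ ⌊|V|/2⌋" on finite odd
universes of size ≥ 3. -/
theorem no_intersection_preserved_matching_definition
    (P : ∀ n : ℕ, (Fin n → Fin n → Prop) → (Fin n → Fin n → Prop) → Prop)
    (hpres : ∀ (n : ℕ) (E1 F1 E2 F2 : Fin n → Fin n → Prop),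
      P n E1 F1 → P n E2 F2 →
      P n (fun x y => E1 x y ∧ E2 x y) (fun x y => F1 x y ∧ F2 x y)) :
    ¬ (∀ n : ℕ, 3 ≤ n → Odd n → ∀ E F : Fin n → Fin n → Prop,
        (P n E F ↔ (IsMatchingRel E F ∧ n / 2 ≤ (relEdges F).ncard))) := by
  intro hdef
  have hdef3 := hdef 3 le_rfl ⟨1, rfl⟩
  have hedge (e : Sym2 (Fin 3)) (he : ¬e.IsDiag) : P 3 (fun _ _ => True) (ToRel {e}) :=
    (hdef3 _ _).2 ⟨isMatchingRel_toRel_singleton he fun _ _ _ => trivial, by simp [relEdges_toRel]⟩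
  have hinter := hpres 3 _ _ _ _ (hedge s(0, 1) (by decide)) (hedge s(1, 2) (by decide))
  rw [← toRel_inter] at hinter
  have hdisjoint : ({s(0, 1)} ∩ {s(1, 2)} : Set (Sym2 (Fin 3))) = ∅ := by
    simp only [Set.singleton_inter_eq_empty, Set.mem_singleton_iff]
    decide
  simpa [relEdges_toRel, hdisjoint] using ((hdef3 _ _).1 hinter).2
end
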